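/- arXiv:1811.04263 — 6 statements merged into one kernel-verified Lean document; each statement's English description precedes it below -/
import Mathlib

section
/- Let I be a finite index set with a distinguished element 0, and let S be an invertible I×I matrix over ℂ such that S φ 0 ≠ 0 for every φ ∈ I. Define structure constants N λ μ ν = Σ_{φ∈I} (S φ λ)·(S φ μ)·(S⁻¹ ν φ)/(S φ 0), and let V be the free ℂ-module with basis (e λ)_{λ∈I}, equipped with the ℂ-bilinear product determined on basis vectors by e λ · e μ = Σ_{ν∈I} N λ μ ν · e ν. Then this product makes V a commutative, associative, unital ℂ-algebra whose identity element is e 0. -/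
open Matrix BigOperators

/-- The Verlinde structure constants attached to a matrix `S` indexed by a finite
set `I` with a distinguished index `z`:
`N λ μ ν = ∑ φ, S φ λ * S φ μ * S⁻¹ ν φ / S φ z`. -/
noncomputable def verlindeN {I : Type*} [Fintype I] [DecidableEq I]
    (S : Matrix I I ℂ) (z : I) (lam mu nu : I) : ℂ :=
  ∑ φ, S φ lam * S φ mu * S⁻¹ nu φ / S φ z

/-- The bilinear Verlinde product on the free ℂ-module `I → ℂ` (with standard
basis `e λ = Pi.single λ 1`), determined on basis vectors by
`e λ · e μ = ∑ ν, N λ μ ν • e ν`. -/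
noncomputable def verlindeMul {I : Type*} [Fintype I] [DecidableEq I]
    (S : Matrix I I ℂ) (z : I) (x y : I → ℂ) : I → ℂ :=
  fun nu => ∑ lam, ∑ mu, x lam * y mu * verlindeN S z lam mu nu

/-! The Verlinde product is pointwise multiplication transported along `S`, twisted by the
column `S.col z`: `x * y = S⁻¹ ((S x) (S y) / S.col z)`. Commutativity and associativity are
therefore inherited from `ℂ` once `S` is invertible, and `e z`, which `S` sends to `S.col z`,
is the unit as soon as that column has no zero entry. -/

namespace Matrix

variable {n α : Type*} [Fintype n] [DecidableEq n] [CommRing α] {A : Matrix n n α}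

theorem mulVec_nonsing_inv_mulVec (hA : IsUnit A.det) (v : n → α) : A *ᵥ (A⁻¹ *ᵥ v) = v := by
  rw [mulVec_mulVec, mul_nonsing_inv A hA, one_mulVec]

theorem nonsing_inv_mulVec_mulVec (hA : IsUnit A.det) (v : n → α) : A⁻¹ *ᵥ (A *ᵥ v) = v := by
  rw [mulVec_mulVec, nonsing_inv_mul A hA, one_mulVec]

end Matrix

section

variable {I : Type*} [Fintype I] [DecidableEq I] (S : Matrix I I ℂ) (z : I)

theorem verlindeMul_eq_inv_mulVec (x y : I → ℂ) :
    verlindeMul S z x y = S⁻¹ *ᵥ (S *ᵥ x * S *ᵥ y / S.col z) := by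
  ext nu
  simp only [verlindeMul, verlindeN, mulVec, dotProduct, Pi.mul_apply, Pi.div_apply,
    Matrix.col_apply, Finset.sum_mul, Finset.mul_sum, Finset.sum_div]
  rw [Finset.sum_comm_cycle]
  refine Finset.sum_congr rfl fun φ _ => ?_
  rw [Finset.sum_comm]
  refine Finset.sum_congr rfl fun lam _ => Finset.sum_congr rfl fun mu _ => ?_
  ring

theorem verlindeMul_comm (x y : I → ℂ) : verlindeMul S z x y = verlindeMul S z y x := by
  rw [verlindeMul_eq_inv_mulVec, verlindeMul_eq_inv_mulVec, mul_comm (S *ᵥ x)]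

theorem verlindeMul_assoc {S : Matrix I I ℂ} (hS : IsUnit S.det) (x y w : I → ℂ) :
    verlindeMul S z (verlindeMul S z x y) w = verlindeMul S z x (verlindeMul S z y w) := by
  simp only [verlindeMul_eq_inv_mulVec, mulVec_nonsing_inv_mulVec hS]
  congr 1
  ext φ
  simp only [Pi.mul_apply, Pi.div_apply]
  ring

theorem single_one_verlindeMul {S : Matrix I I ℂ} (hS : IsUnit S.det) (h0 : ∀ φ, S φ z ≠ 0)
    (x : I → ℂ) : verlindeMul S z (Pi.single z 1) x = x := by
  have hcancel : S.col z * S *ᵥ x / S.col z = S *ᵥ x := by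
    ext φ
    exact mul_div_cancel_left₀ _ (h0 φ)
  rw [verlindeMul_eq_inv_mulVec, mulVec_single_one, hcancel, nonsing_inv_mulVec_mulVec hS]

end

/-- The Verlinde product makes the free ℂ-module with basis indexed by `I` a
commutative associative unital algebra with identity `e z = Pi.single z 1`,
provided `S` is invertible and the column of `S` at the distinguished index `z`
has no zero entries. -/
theorem verlinde_product_comm_assoc_unital
    {I : Type*} [Fintype I] [DecidableEq I]
    (S : Matrix I I ℂ) (z : I) (hS : IsUnit S.det)
    (h0 : ∀ φ : I, S φ z ≠ 0) :
    (∀ x y : I → ℂ, verlindeMul S z x y = verlindeMul S z y x) ∧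
    (∀ x y w : I → ℂ,
      verlindeMul S z (verlindeMul S z x y) w
        = verlindeMul S z x (verlindeMul S z y w)) ∧
    (∀ x : I → ℂ, verlindeMul S z (Pi.single z 1) x = x) ∧
    (∀ x : I → ℂ, verlindeMul S z x (Pi.single z 1) = x) :=
  ⟨verlindeMul_comm S z, verlindeMul_assoc z hS, single_one_verlindeMul z hS h0,
    fun x => (verlindeMul_comm S z x _).trans (single_one_verlindeMul z hS h0 x)⟩
end

section
/- Fix an integer n ≥ 1, set N = 2n + 3, and let V, F, and the Verlinde product be as defined. Then for all integers a, b with 0 ≤ b ≤ a ≤ n, the product in V is given explicitly by e_a · e_b = Σ_{i : 0 ≤ i ≤ b, a−b+2i ≤ n} e_{a−b+2i} − Σ_{i : 0 ≤ i ≤ b, a−b+2i > n} e_{2n+1+b−2i−a}. -/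
open BigOperators

/-- The folding map `F : ℕ → V` for type `A₂⁽²⁾` at level `2n`, where
`V = Fin (n+1) → ℤ` is the free ℤ-module with basis `e₀, …, e_n` and
`N = 2n + 3`:  `F m = e_{m'}` if `m ≡ m' (mod N)` with `0 ≤ m' ≤ n`;
`F m = 0` if `m ≡ N - 1 (mod N)`; `F m = -e_{m'}` if `m + m' + 2 ≡ 0 (mod N)`
with `0 ≤ m' ≤ n`. -/
def foldA2 (n m : ℕ) : Fin (n + 1) → ℤ :=
  if h : m % (2 * n + 3) ≤ n then
    Pi.single (⟨m % (2 * n + 3), by omega⟩ : Fin (n + 1)) 1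
  else if h2 : m % (2 * n + 3) = 2 * n + 2 then 0
  else - Pi.single (⟨2 * n + 1 - m % (2 * n + 3), by omega⟩ : Fin (n + 1)) 1

/-- The basis vector `e_m` of `V = Fin (n+1) → ℤ` (zero if `m > n`). -/
def eN (n m : ℕ) : Fin (n + 1) → ℤ :=
  if h : m ≤ n then Pi.single (⟨m, by omega⟩ : Fin (n + 1)) 1 else 0

/-- The Verlinde product on `V = Fin (n+1) → ℤ`: the ℤ-bilinear product with
`e_a · e_b = ∑_{i=0}^{min a b} F (a + b - 2 i)`. -/
def vmul (n : ℕ) (x y : Fin (n + 1) → ℤ) : Fin (n + 1) → ℤ :=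
  fun c => ∑ a : Fin (n + 1), ∑ b : Fin (n + 1),
    x a * y b * (∑ i ∈ Finset.range (min a.1 b.1 + 1), foldA2 n (a.1 + b.1 - 2 * i)) c

/-- The structure constants `N_{ab}^c` of the Verlinde product, defined by
`e_a · e_b = ∑_c N_{ab}^c e_c`. -/
def Nconst (n a b c : ℕ) : ℤ :=
  if h : c ≤ n then vmul n (eN n a) (eN n b) ⟨c, by omega⟩ else 0

/-! Folding the Clebsch–Gordan series: `e_a · e_b = ∑_{i ≤ b} F(a - b + 2i)` after reversing
the order of summation, and every argument satisfies `a - b + 2i ≤ 2n < N`, so `F` is read off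
without reduction mod `N`: it is `e_m` for `m ≤ n` and `-e_{2n+1-m}` for `n < m ≤ 2n + 1`. -/

theorem eN_of_le {n m : ℕ} (hm : m ≤ n) :
    eN n m = Pi.single (⟨m, Nat.lt_succ_of_le hm⟩ : Fin (n + 1)) 1 :=
  dif_pos hm

theorem foldA2_of_le {n m : ℕ} (hm : m ≤ n) : foldA2 n m = eN n m := by
  have hmod : m % (2 * n + 3) = m := Nat.mod_eq_of_lt (by omega)
  simp only [foldA2, eN, hmod, dif_pos hm]

theorem foldA2_of_lt_of_le {n m : ℕ} (hnm : n < m) (hm : m ≤ 2 * n + 1) :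
    foldA2 n m = -eN n (2 * n + 1 - m) := by
  have hmod : m % (2 * n + 3) = m := Nat.mod_eq_of_lt (by omega)
  simp only [foldA2, eN, hmod, dif_neg (Nat.not_le.mpr hnm),
    dif_neg (show m ≠ 2 * n + 2 by omega), dif_pos (show 2 * n + 1 - m ≤ n by omega)]

theorem vmul_eN_eN {n a b : ℕ} (ha : a ≤ n) (hb : b ≤ n) :
    vmul n (eN n a) (eN n b) =
      ∑ i ∈ Finset.range (min a b + 1), foldA2 n (a + b - 2 * i) := by
  funext c
  simp only [vmul, eN_of_le ha, eN_of_le hb, Finset.sum_apply]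
  rw [Fintype.sum_eq_single ⟨a, by omega⟩ fun a' ha' => by simp [Pi.single_apply, ha'],
    Fintype.sum_eq_single ⟨b, by omega⟩ fun b' hb' => by simp [hb']]
  simp

theorem vmul_explicit_general (n : ℕ) (a b : ℕ) (hba : b ≤ a) (han : a ≤ n) :
    vmul n (eN n a) (eN n b) =
      (∑ i ∈ (Finset.range (b + 1)).filter (fun i => a - b + 2 * i ≤ n),
        eN n (a - b + 2 * i))
      - ∑ i ∈ (Finset.range (b + 1)).filter (fun i => n < a - b + 2 * i),
        eN n (2 * n + 1 + b - 2 * i - a) := by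
  rw [vmul_eN_eN han (hba.trans han), min_eq_right hba, ← Finset.sum_range_reflect,
    Finset.sum_filter, Finset.sum_filter, ← Finset.sum_sub_distrib]
  refine Finset.sum_congr rfl fun i hi => ?_
  rw [Finset.mem_range] at hi
  rw [show a + b - 2 * (b + 1 - 1 - i) = a - b + 2 * i by omega]
  by_cases hm : a - b + 2 * i ≤ n
  · rw [if_pos hm, if_neg (Nat.not_lt.mpr hm), sub_zero, foldA2_of_le hm]
  · rw [if_neg hm, if_pos (Nat.not_le.mp hm), zero_sub, foldA2_of_lt_of_le (Nat.not_le.mp hm)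
      (by omega), show 2 * n + 1 - (a - b + 2 * i) = 2 * n + 1 + b - 2 * i - a by omega]

/-- Explicit formula for the Verlinde product of type `A₂⁽²⁾` at level `2n`:
for `0 ≤ b ≤ a ≤ n`,
`e_a · e_b = ∑_{i ≤ b, a-b+2i ≤ n} e_{a-b+2i} - ∑_{i ≤ b, a-b+2i > n} e_{2n+1+b-2i-a}`. -/
theorem vmul_explicit (n : ℕ) (hn : 1 ≤ n) (a b : ℕ) (hba : b ≤ a) (han : a ≤ n) :
    vmul n (eN n a) (eN n b) =
      (∑ i ∈ (Finset.range (b + 1)).filter (fun i => a - b + 2 * i ≤ n),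
        eN n (a - b + 2 * i))
      - ∑ i ∈ (Finset.range (b + 1)).filter (fun i => n < a - b + 2 * i),
        eN n (2 * n + 1 + b - 2 * i - a) :=
  vmul_explicit_general n a b hba han
end

section
/- Fix an integer n ≥ 1, set N = 2n + 3, and let V, F, the Verlinde product, and the structure constants N_{ab}^c be as defined. Then for all integers a, b, c with 0 ≤ b ≤ a ≤ n and 0 ≤ c ≤ n: N_{ab}^c = 1 if c ≡ a + b (mod 2) and a − b ≤ c ≤ a + b; N_{ab}^c = −1 if c ≢ a + b (mod 2) and c ≥ 2n + 1 − (a + b); and N_{ab}^c = 0 in all other cases. In particular every structure constant lies in {−1, 0, 1}. -/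
open BigOperators

/-!
Expanding `e_a · e_b` by bilinearity, `N_{ab}^c` is the `c`-th coordinate of
`∑_{i ≤ b} F (a + b - 2i)`. All arguments `m = a + b - 2i` lie in `[0, 2n]`, where the folding
map is just `F m = e_m` for `m ≤ n` and `F m = -e_{2n+1-m}` for `n < m`. So the `c`-th coordinate
of `F m` is `[m = c] - [m = 2n + 1 - c]`, and each of the two indicators is hit by at most one
term of the Clebsch–Gordan string `a + b, a + b - 2, …, a - b`: the first exactly when `c` lies
in the string, the second exactly when its reflection `2n + 1 - c` does.
-/

lemma Nconst_eq_sum_foldA2 {n a b c : ℕ} (ha : a ≤ n) (hb : b ≤ n) (hc : c ≤ n) :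
    Nconst n a b c =
      ∑ i ∈ Finset.range (min a b + 1), foldA2 n (a + b - 2 * i) ⟨c, by omega⟩ := by
  simp [Nconst, vmul, eN, hc, ha, hb, Pi.single_apply]

lemma foldA2_apply_of_le {n m c : ℕ} (hm : m ≤ 2 * n) (hc : c ≤ n) :
    foldA2 n m ⟨c, by omega⟩ =
      (if m = c then 1 else 0) - (if m = 2 * n + 1 - c then 1 else 0) := by
  have hmod : m % (2 * n + 3) = m := Nat.mod_eq_of_lt (by omega)
  simp only [foldA2, hmod]
  split_ifs <;> simp only [Pi.zero_apply, Pi.neg_apply, Pi.single_apply, Fin.mk.injEq] <;>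
    (try split_ifs) <;> omega

lemma sum_range_indicator_sub_two_mul {a b t : ℕ} (hba : b ≤ a) :
    (∑ i ∈ Finset.range (b + 1), if a + b - 2 * i = t then (1 : ℤ) else 0) =
      if t % 2 = (a + b) % 2 ∧ a - b ≤ t ∧ t ≤ a + b then 1 else 0 := by
  split_ifs with ht
  · rw [Finset.sum_eq_single_of_mem ((a + b - t) / 2) (Finset.mem_range.2 (by omega)),
      if_pos (by omega)]
    intro i hi hne
    rw [Finset.mem_range] at hi
    rw [if_neg (by omega)]
  · refine Finset.sum_eq_zero fun i hi => ?_
    rw [Finset.mem_range] at hi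
    rw [if_neg (by omega)]

theorem Nconst_explicit_general (n : ℕ) (a b c : ℕ)
    (hba : b ≤ a) (han : a ≤ n) (hcn : c ≤ n) :
    (Nconst n a b c =
      if c % 2 = (a + b) % 2 ∧ a - b ≤ c ∧ c ≤ a + b then 1
      else if c % 2 ≠ (a + b) % 2 ∧ 2 * n + 1 ≤ a + b + c then -1
      else 0) ∧
    Nconst n a b c ∈ ({-1, 0, 1} : Set ℤ) := by
  have hval : Nconst n a b c =
      if c % 2 = (a + b) % 2 ∧ a - b ≤ c ∧ c ≤ a + b then 1
      else if c % 2 ≠ (a + b) % 2 ∧ 2 * n + 1 ≤ a + b + c then -1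
      else 0 := by
    rw [Nconst_eq_sum_foldA2 han (hba.trans han) hcn, min_eq_right hba,
      Finset.sum_congr rfl fun i _ => foldA2_apply_of_le (by omega) hcn,
      Finset.sum_sub_distrib, sum_range_indicator_sub_two_mul hba,
      sum_range_indicator_sub_two_mul hba]
    split_ifs <;> omega
  refine ⟨hval, ?_⟩
  rw [hval]
  split_ifs <;> simp

/-- Explicit values of the structure constants `N_{ab}^c` of the Verlinde
algebra of type `A₂⁽²⁾` at level `2n`: for `0 ≤ b ≤ a ≤ n` and `0 ≤ c ≤ n`,
`N_{ab}^c = 1` if `c ≡ a + b (mod 2)` and `a - b ≤ c ≤ a + b`;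
`N_{ab}^c = -1` if `c ≢ a + b (mod 2)` and `c ≥ 2n + 1 - (a + b)`;
`N_{ab}^c = 0` otherwise.  In particular `N_{ab}^c ∈ {-1, 0, 1}`. -/
theorem Nconst_explicit (n : ℕ) (hn : 1 ≤ n) (a b c : ℕ)
    (hba : b ≤ a) (han : a ≤ n) (hcn : c ≤ n) :
    (Nconst n a b c =
      if c % 2 = (a + b) % 2 ∧ a - b ≤ c ∧ c ≤ a + b then 1
      else if c % 2 ≠ (a + b) % 2 ∧ 2 * n + 1 ≤ a + b + c then -1
      else 0) ∧
    Nconst n a b c ∈ ({-1, 0, 1} : Set ℤ) :=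
  Nconst_explicit_general n a b c hba han hcn
end

section
/- Fix an even integer n ≥ 2, set N = 2n + 3, and let V, F, the Verlinde product, and the structure constants N_{ab}^c be as defined. Then N_{nn}^1 = −1; that is, the coefficient of e₁ in e_n · e_n equals −1. -/
open BigOperators

/-!
Only the top term `F (2n)` of `e_n · e_n = ∑_{i ≤ n} F (2n - 2i)` contributes to `e₁`: every
argument `2n - 2i` is even and below `N`, so it folds to `e₁` only through the reflection
`m ↦ -e_{N - 2 - m}`, i.e. for `m = 2n`, where it gives `-e₁`.
-/

open Finset

lemma eN_of_le_s6 {n m : ℕ} (h : m ≤ n) : eN n m = Pi.single ⟨m, by omega⟩ 1 := dif_pos h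

lemma vmul_single_single (n : ℕ) (a b : Fin (n + 1)) :
    vmul n (Pi.single a 1) (Pi.single b 1) =
      ∑ i ∈ range (min a.1 b.1 + 1), foldA2 n (a.1 + b.1 - 2 * i) := by
  funext c
  rw [vmul, Fintype.sum_eq_single a fun a' ha' => by simp [Pi.single_eq_of_ne ha'],
    Fintype.sum_eq_single b fun b' hb' => by simp [Pi.single_eq_of_ne hb']]
  simp

lemma foldA2_of_le_s6 {n m : ℕ} (h : m ≤ n) : foldA2 n m = Pi.single ⟨m, by omega⟩ 1 := by
  have hm : m % (2 * n + 3) = m := Nat.mod_eq_of_lt (by omega)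
  simp only [foldA2, hm, dif_pos h]

lemma foldA2_of_lt_of_le_s6 {n m : ℕ} (h₁ : n < m) (h₂ : m ≤ 2 * n + 1) :
    foldA2 n m = -Pi.single ⟨2 * n + 1 - m, by omega⟩ 1 := by
  have hm : m % (2 * n + 3) = m := Nat.mod_eq_of_lt (by omega)
  simp only [foldA2, hm, dif_neg (show ¬m ≤ n by omega), dif_neg (show m ≠ 2 * n + 2 by omega)]

lemma foldA2_two_mul_apply_one {n k : ℕ} (hn : 1 ≤ n) (hk : k ≤ n) :
    foldA2 n (2 * k) ⟨1, by omega⟩ = if k = n then -1 else 0 := by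
  by_cases hkn : 2 * k ≤ n
  · rw [foldA2_of_le_s6 hkn, Pi.single_apply, if_neg (by simp [Fin.ext_iff]; omega),
      if_neg (by omega)]
  · rw [foldA2_of_lt_of_le_s6 (by omega) (by omega), Pi.neg_apply, Pi.single_apply]
    by_cases hk' : k = n
    · simp [hk']
    · rw [if_neg (by simp [Fin.ext_iff]; omega), if_neg hk', neg_zero]

theorem Nconst_n_n_one_general (n : ℕ) (hn : 2 ≤ n) :
    Nconst n n n 1 = -1 := by
  have hn₁ : 1 ≤ n := by omega
  have hterm : ∀ i ∈ range (n + 1),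
      foldA2 n (n + n - 2 * i) ⟨1, by omega⟩ = if i = 0 then -1 else 0 := fun i hi => by
    have hi : i ≤ n := Nat.lt_succ_iff.mp (mem_range.mp hi)
    rw [show n + n - 2 * i = 2 * (n - i) by omega,
      foldA2_two_mul_apply_one hn₁ (Nat.sub_le n i)]
    exact if_congr (by omega) rfl rfl
  rw [Nconst, dif_pos hn₁, eN_of_le_s6 le_rfl, vmul_single_single, min_self, Finset.sum_apply,
    sum_congr rfl hterm, sum_ite_eq', if_pos (mem_range.mpr n.succ_pos)]

/-- For even `n ≥ 2`, the coefficient of `e₁` in `e_n · e_n` equals `-1`: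
`N_{nn}^1 = -1` in the Verlinde algebra of type `A₂⁽²⁾` at level `2n`. -/
theorem Nconst_n_n_one (n : ℕ) (hn : 2 ≤ n) (hev : Even n) :
    Nconst n n n 1 = -1 :=
  Nconst_n_n_one_general n hn
end

section
/- Fix an integer n ≥ 1, set N = 2n + 3, and let V, the Verlinde product, and the structure constants N_{ab}^c be as defined. Then the ℤ-bilinear product ∗ on V determined by e_a ∗ e_b = Σ_{c=0}^{n} |N_{ab}^c| e_c (replacing each structure constant by its absolute value) is commutative and associative, with identity element e₀. -/
open BigOperators

/-- The ℤ-bilinear product on `V = Fin (n+1) → ℤ` whose structure constants are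
the absolute values `|N_{ab}^c|` of the Verlinde structure constants. -/
def vmulAbs (n : ℕ) (x y : Fin (n + 1) → ℤ) : Fin (n + 1) → ℤ :=
  fun c => ∑ a : Fin (n + 1), ∑ b : Fin (n + 1), x a * y b * |Nconst n a.1 b.1 c.1|

/-!
Shifting by `ρ`, the folding map becomes `F m = f (m + 1)` for an odd function `f` on
`ℤ/(2n+3)` with `f (d + 1) = e_d`. Then `e_a · e_b` is the folded Clebsch–Gordan string
`∑_{i ≤ b} f (a + 1 + b - 2i)`: the terms beyond `min a b` cancel in pairs. Multiplying a
string by `e_e` only needs `f k · e_e = ∑_{j ≤ e} f (k + e - 2j)`, which holds for all `k` by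
oddness, so `(e_a · e_b) · e_e` is a double string symmetric in `b` and `e`; this gives
associativity. Finally `a + b - 2i ≤ 2n`, so every term of `N_{ab}^c` has the sign
`(-1)^(a+b+c)`, and these signs cancel in the associativity identity for `|N_{ab}^c|`.
-/

open Finset

section StructConstMul

variable {ι R : Type*} [Fintype ι] [CommSemiring R]

def structConstMul (K : ι → ι → ι → R) (x y : ι → R) : ι → R :=
  fun c => ∑ a, ∑ b, x a * y b * K a b c

variable {K : ι → ι → ι → R}

theorem structConstMul_comm (hK : ∀ a b, K a b = K b a) (x y : ι → R) :
    structConstMul K x y = structConstMul K y x := by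
  funext c
  rw [structConstMul, structConstMul, sum_comm]
  simp only [hK, mul_comm (x _)]

theorem structConstMul_assoc
    (hK : ∀ a b e c, ∑ d, K a b d * K d e c = ∑ d, K b e d * K a d c) (x y z : ι → R) :
    structConstMul K (structConstMul K x y) z = structConstMul K x (structConstMul K y z) := by
  funext c
  calc structConstMul K (structConstMul K x y) z c
      = ∑ a, ∑ b, ∑ e, x a * y b * z e * ∑ d, K a b d * K d e c := by
        simp only [structConstMul, sum_mul, mul_sum]
        rw [sum_comm, sum_congr rfl fun e _ => sum_comm, sum_comm]
        refine sum_congr rfl fun a _ => ?_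
        rw [sum_congr rfl fun e _ => sum_comm, sum_comm]
        simp only [mul_assoc, mul_left_comm]
    _ = ∑ a, ∑ b, ∑ e, x a * y b * z e * ∑ d, K b e d * K a d c := by simp only [hK]
    _ = structConstMul K x (structConstMul K y z) c := by
        simp only [structConstMul, sum_mul, mul_sum]
        refine sum_congr rfl fun a _ => ?_
        rw [eq_comm, sum_comm]
        refine sum_congr rfl fun b _ => ?_
        rw [sum_comm]
        simp only [mul_assoc, mul_left_comm]

theorem structConstMul_single_left [DecidableEq ι] {i : ι}
    (hK : ∀ b, K i b = Pi.single b 1) (x : ι → R) :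
    structConstMul K (Pi.single i 1) x = x := by
  funext c
  simp [structConstMul, Pi.single_apply, hK]

end StructConstMul

namespace VerlindeA2

variable {n : ℕ}

theorem foldA2_mod (m : ℕ) : foldA2 n (m % (2 * n + 3)) = foldA2 n m := by
  simp only [foldA2, Nat.mod_mod]

theorem foldA2_fin (d : Fin (n + 1)) : foldA2 n d = Pi.single d 1 := by
  have hd : (d : ℕ) % (2 * n + 3) = d := Nat.mod_eq_of_lt (by omega)
  simp only [foldA2, hd, dif_pos d.is_le]

theorem foldA2_reflect (d : Fin (n + 1)) : foldA2 n (2 * n + 1 - d) = -Pi.single d 1 := by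
  have hd : (2 * n + 1 - d) % (2 * n + 3) = 2 * n + 1 - d := Nat.mod_eq_of_lt (by omega)
  have hd' : 2 * n + 1 - (2 * n + 1 - (d : ℕ)) = d := by omega
  simp only [foldA2, hd, dif_neg (show ¬2 * n + 1 - (d : ℕ) ≤ n by omega),
    dif_neg (show 2 * n + 1 - (d : ℕ) ≠ 2 * n + 2 by omega), hd']

theorem foldA2_two_mul_add_two : foldA2 n (2 * n + 2) = 0 := by
  have h : (2 * n + 2) % (2 * n + 3) = 2 * n + 2 := Nat.mod_eq_of_lt (by omega)
  simp only [foldA2, h, dif_neg (show ¬2 * n + 2 ≤ n by omega), dif_pos]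

-- The `ρ`-shift `m ↦ m + 1` turns the affine Weyl group action defining `foldA2` into `k ↦ ±k`.
def shiftedFold (n : ℕ) (k : ZMod (2 * n + 3)) : Fin (n + 1) → ℤ :=
  foldA2 n (k - 1).val

theorem foldA2_eq_shiftedFold (m : ℕ) : foldA2 n m = shiftedFold n (m + 1) := by
  rw [shiftedFold, add_sub_cancel_right, ZMod.val_natCast, foldA2_mod]

theorem shiftedFold_zero : shiftedFold n 0 = 0 := by
  have h : ((0 : ZMod (2 * n + 3)) - 1) = ((2 * n + 2 : ℕ) : ZMod (2 * n + 3)) := by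
    have h0 : ((2 * n + 3 : ℕ) : ZMod (2 * n + 3)) = 0 := ZMod.natCast_self _
    push_cast at h0 ⊢
    linear_combination -h0
  rw [shiftedFold, h, ZMod.val_natCast, foldA2_mod, foldA2_two_mul_add_two]

theorem shiftedFold_natCast_succ (d : Fin (n + 1)) :
    shiftedFold n ((d : ℕ) + 1) = Pi.single d 1 := by
  rw [← foldA2_eq_shiftedFold, foldA2_fin]

theorem shiftedFold_neg_natCast_succ (d : Fin (n + 1)) :
    shiftedFold n (-((d : ℕ) + 1)) = -Pi.single d 1 := by
  have h : -((d : ZMod (2 * n + 3)) + 1) = ((2 * n + 1 - d : ℕ) : ZMod (2 * n + 3)) + 1 := by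
    have h0 : ((2 * n + 3 : ℕ) : ZMod (2 * n + 3)) = 0 := ZMod.natCast_self _
    push_cast [Nat.cast_sub (show (d : ℕ) ≤ 2 * n + 1 by omega)] at h0 ⊢
    linear_combination -h0
  rw [h, ← foldA2_eq_shiftedFold, foldA2_reflect]

theorem cases_zero_or_natCast_succ {P : ZMod (2 * n + 3) → Prop} (zero : P 0)
    (pos : ∀ d : Fin (n + 1), P ((d : ℕ) + 1)) (neg : ∀ d : Fin (n + 1), P (-((d : ℕ) + 1)))
    (k : ZMod (2 * n + 3)) : P k := by
  have hk : k.val < 2 * n + 3 := ZMod.val_lt k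
  rw [← ZMod.natCast_zmod_val k]
  rcases Nat.eq_zero_or_pos k.val with h | h
  · rwa [h, Nat.cast_zero]
  rcases le_or_gt k.val (n + 1) with h' | h'
  · convert pos ⟨k.val - 1, by omega⟩ using 1
    push_cast [Nat.cast_sub h]
    ring
  · convert neg ⟨2 * n + 2 - k.val, by omega⟩ using 1
    have h0 : ((2 * n + 3 : ℕ) : ZMod (2 * n + 3)) = 0 := ZMod.natCast_self _
    push_cast [Nat.cast_sub (show k.val ≤ 2 * n + 2 by omega)] at h0 ⊢
    linear_combination h0

theorem shiftedFold_neg (k : ZMod (2 * n + 3)) : shiftedFold n (-k) = -shiftedFold n k := by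
  induction k using cases_zero_or_natCast_succ with
  | zero => simp [shiftedFold_zero]
  | pos d => rw [shiftedFold_neg_natCast_succ, shiftedFold_natCast_succ]
  | neg d => rw [neg_neg, shiftedFold_neg_natCast_succ, shiftedFold_natCast_succ, neg_neg]

-- The folded string `k + c, k + c - 2, …, k - c`.
def cgSum (n : ℕ) (k : ZMod (2 * n + 3)) (c : ℕ) : Fin (n + 1) → ℤ :=
  ∑ j ∈ range (c + 1), shiftedFold n (k + c - 2 * j)

theorem cgSum_neg (k : ZMod (2 * n + 3)) (c : ℕ) : cgSum n (-k) c = -cgSum n k c := by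
  rw [cgSum, cgSum, ← sum_range_reflect, ← sum_neg_distrib]
  refine sum_congr rfl fun j hj => ?_
  rw [← shiftedFold_neg, Nat.add_sub_cancel,
    Nat.cast_sub (Nat.lt_succ_iff.mp (mem_range.mp hj))]
  ring_nf

theorem cgSum_zero (c : ℕ) : cgSum n 0 c = 0 :=
  self_eq_neg.mp (by rw [← cgSum_neg, neg_zero])

theorem sum_smul_cgSum (k : ZMod (2 * n + 3)) (c : ℕ) :
    ∑ d : Fin (n + 1), shiftedFold n k d • cgSum n ((d : ℕ) + 1) c = cgSum n k c := by
  induction k using cases_zero_or_natCast_succ with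
  | zero => simp [shiftedFold_zero, cgSum_zero]
  | pos d => simp [shiftedFold_natCast_succ, Pi.single_apply]
  | neg d =>
    rw [shiftedFold_neg_natCast_succ, cgSum_neg]
    simp [Pi.single_apply]

theorem cgSum_natCast_succ_eq_sum_range_min (a b : ℕ) :
    cgSum n (a + 1) b = ∑ i ∈ range (min a b + 1), shiftedFold n (a + 1 + b - 2 * i) := by
  rcases le_or_gt b a with hba | hab
  · rw [min_eq_right hba, cgSum]
  obtain ⟨m, rfl⟩ := Nat.exists_eq_add_of_lt hab
  rw [min_eq_left hab.le, cgSum, show a + m + 1 + 1 = a + 1 + (m + 1) by omega, sum_range_add,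
    add_eq_left, ← cgSum_zero (n := n) m, cgSum]
  refine sum_congr rfl fun i _ => ?_
  push_cast
  ring_nf

theorem sum_foldA2_eq_cgSum (a b : ℕ) :
    ∑ i ∈ range (min a b + 1), foldA2 n (a + b - 2 * i) = cgSum n (a + 1) b := by
  rw [cgSum_natCast_succ_eq_sum_range_min]
  refine sum_congr rfl fun i hi => ?_
  have hi : 2 * i ≤ a + b := by have := mem_range.mp hi; omega
  rw [foldA2_eq_shiftedFold]
  push_cast [Nat.cast_sub hi]
  ring_nf

theorem cgSum_natCast_succ_comm (a b : ℕ) :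
    cgSum n (a + 1) b = cgSum n (b + 1) a := by
  rw [← sum_foldA2_eq_cgSum, ← sum_foldA2_eq_cgSum, min_comm, add_comm a b]

theorem sum_cgSum_smul_cgSum (a b e : ℕ) :
    ∑ d : Fin (n + 1), cgSum n (a + 1) b d • cgSum n ((d : ℕ) + 1) e =
      ∑ i ∈ range (b + 1), ∑ j ∈ range (e + 1), shiftedFold n (a + 1 + b + e - 2 * i - 2 * j) := by
  simp only [cgSum.eq_1 n (a + 1) b, Finset.sum_apply, sum_smul]
  rw [sum_comm]
  refine sum_congr rfl fun i _ => ?_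
  rw [sum_smul_cgSum, cgSum]
  refine sum_congr rfl fun j _ => ?_
  ring_nf

theorem cgSum_assoc (a b e : ℕ) :
    ∑ d : Fin (n + 1), cgSum n (a + 1) b d • cgSum n ((d : ℕ) + 1) e =
      ∑ d : Fin (n + 1), cgSum n (b + 1) e d • cgSum n (a + 1) d := by
  simp only [cgSum_natCast_succ_comm a]
  rw [sum_cgSum_smul_cgSum, sum_cgSum_smul_cgSum, sum_comm]
  refine sum_congr rfl fun i _ => sum_congr rfl fun j _ => ?_
  ring_nf

theorem Nconst_eq_sum (a b c : Fin (n + 1)) :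
    Nconst n a b c = (∑ i ∈ range (min (a : ℕ) b + 1), foldA2 n (a + b - 2 * i)) c := by
  simp [Nconst, vmul, eN, Fin.is_le, Pi.single_apply]

theorem Nconst_eq_cgSum (a b c : Fin (n + 1)) : Nconst n a b c = cgSum n (a + 1) b c := by
  rw [Nconst_eq_sum, sum_foldA2_eq_cgSum]

theorem foldA2_apply_eq_neg_one_pow_mul_abs {m : ℕ} (hm : m ≤ 2 * n + 1) (c : Fin (n + 1)) :
    foldA2 n m c = (-1) ^ (m + c) * |foldA2 n m c| := by
  rcases le_or_gt m n with hmn | hmn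
  · have := foldA2_fin (⟨m, by omega⟩ : Fin (n + 1))
    simp only at this
    rw [this, Pi.single_apply]
    split_ifs with h
    · subst h
      simp [← two_mul, pow_mul]
    · simp
  · have := foldA2_reflect (⟨2 * n + 1 - m, by omega⟩ : Fin (n + 1))
    simp only [show 2 * n + 1 - (2 * n + 1 - m) = m by omega] at this
    rw [this, Pi.neg_apply, Pi.single_apply]
    split_ifs with h
    · subst h
      simp [show m + (2 * n + 1 - m) = 2 * (n : ℕ) + 1 by omega, pow_succ, pow_mul]
    · simp

theorem abs_Nconst (a b c : Fin (n + 1)) :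
    |Nconst n a b c| = (-1) ^ ((a : ℕ) + b + c) * Nconst n a b c := by
  set σ : ℤ := (-1) ^ ((a : ℕ) + b + c)
  have hterm : ∀ i ∈ range (min (a : ℕ) b + 1),
      foldA2 n (a + b - 2 * i) c = σ * |foldA2 n (a + b - 2 * i) c| := by
    intro i hi
    have hi := mem_range.mp hi
    have hσ : σ = (-1) ^ (a + b - 2 * i + c) :=
      neg_one_pow_congr (by simp only [Nat.even_iff]; omega)
    rw [hσ]
    exact foldA2_apply_eq_neg_one_pow_mul_abs (by omega) c
  have hσ : σ * σ = 1 := by rw [← pow_add, ← two_mul, pow_mul, neg_one_sq, one_pow]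
  rw [Nconst_eq_sum, Finset.sum_apply, sum_congr rfl hterm, ← mul_sum, abs_mul, abs_neg_one_pow,
    one_mul, abs_of_nonneg (sum_nonneg fun i _ => abs_nonneg _), ← mul_assoc, hσ, one_mul]

def absNconst (n : ℕ) (a b c : Fin (n + 1)) : ℤ := |Nconst n a b c|

theorem absNconst_comm (a b : Fin (n + 1)) : absNconst n a b = absNconst n b a := by
  funext c
  simp only [absNconst, Nconst_eq_cgSum, cgSum_natCast_succ_comm (a : ℕ)]

theorem absNconst_assoc (a b e c : Fin (n + 1)) :
    ∑ d, absNconst n a b d * absNconst n d e c = ∑ d, absNconst n b e d * absNconst n a d c := by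
  have hsign {p q r : ℕ} (h : (p + q) % 2 = r % 2) : (-1 : ℤ) ^ p * (-1) ^ q = (-1) ^ r := by
    rw [← pow_add]
    exact neg_one_pow_congr (by simp only [Nat.even_iff]; omega)
  have hassoc := congrFun (cgSum_assoc (n := n) a b e) c
  simp only [Finset.sum_apply, Pi.smul_apply, smul_eq_mul] at hassoc
  calc ∑ d, absNconst n a b d * absNconst n d e c
      = (-1) ^ ((a : ℕ) + b + e + c) * ∑ d : Fin (n + 1), Nconst n a b d * Nconst n d e c := by
        simp only [absNconst, abs_Nconst, mul_sum, mul_mul_mul_comm _ (Nconst n a b _)]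
        refine sum_congr rfl fun d _ => ?_
        rw [hsign (r := (a : ℕ) + b + e + c) (by omega)]
    _ = (-1) ^ ((a : ℕ) + b + e + c) * ∑ d : Fin (n + 1), Nconst n b e d * Nconst n a d c := by
        simp only [Nconst_eq_cgSum, hassoc]
    _ = ∑ d, absNconst n b e d * absNconst n a d c := by
        simp only [absNconst, abs_Nconst, mul_sum, mul_mul_mul_comm _ (Nconst n b e _)]
        refine sum_congr rfl fun d _ => ?_
        rw [hsign (r := (a : ℕ) + b + e + c) (by omega)]

theorem absNconst_zero_left (b : Fin (n + 1)) : absNconst n 0 b = Pi.single b 1 := by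
  funext c
  rw [absNconst, Nconst_eq_sum]
  simp [foldA2_fin, Pi.single_apply, apply_ite]

end VerlindeA2

open VerlindeA2 in
theorem vmulAbs_comm_assoc_unital_general (n : ℕ) :
    (∀ x y : Fin (n + 1) → ℤ, vmulAbs n x y = vmulAbs n y x) ∧
    (∀ x y z : Fin (n + 1) → ℤ,
      vmulAbs n (vmulAbs n x y) z = vmulAbs n x (vmulAbs n y z)) ∧
    (∀ x : Fin (n + 1) → ℤ, vmulAbs n (eN n 0) x = x) ∧
    (∀ x : Fin (n + 1) → ℤ, vmulAbs n x (eN n 0) = x) := by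
  have hmul : vmulAbs n = structConstMul (absNconst n) := rfl
  have hunit : eN n 0 = Pi.single 0 1 := dif_pos n.zero_le
  have comm := structConstMul_comm (absNconst_comm (n := n))
  have unit_left := structConstMul_single_left (absNconst_zero_left (n := n))
  refine ⟨comm, structConstMul_assoc absNconst_assoc, ?_, fun x => ?_⟩ <;> rw [hmul, hunit]
  · exact unit_left
  · rw [comm, unit_left]

/-- Replacing each structure constant of the Verlinde algebra of type `A₂⁽²⁾` at
level `2n` by its absolute value again yields a commutative associative product
with identity `e₀`. -/
theorem vmulAbs_comm_assoc_unital (n : ℕ) (hn : 1 ≤ n) :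
    (∀ x y : Fin (n + 1) → ℤ, vmulAbs n x y = vmulAbs n y x) ∧
    (∀ x y z : Fin (n + 1) → ℤ,
      vmulAbs n (vmulAbs n x y) z = vmulAbs n x (vmulAbs n y z)) ∧
    (∀ x : Fin (n + 1) → ℤ, vmulAbs n (eN n 0) x = x) ∧
    (∀ x : Fin (n + 1) → ℤ, vmulAbs n x (eN n 0) = x) :=
  vmulAbs_comm_assoc_unital_general n
end

section
/- Fix integers ℓ ≥ 1 and k ≥ 1 and set N = k + 2ℓ + 1. Let x ∈ ℤ^ℓ be strictly dominant (x₁ > x₂ > ⋯ > x_ℓ ≥ 1) and regular (x_i + x_j ≢ 0 (mod N) for all i ≠ j, and 2x_i ≢ 0 (mod N) for all i), and assume x₁ < N. Then there exist an integer m with 1 ≤ m ≤ N and a sequence (i₁, …, i_m) of integers with 0 ≤ i_t ≤ ℓ for each t, such that y := w_{i_m} ∘ w_{i_{m−1}} ∘ ⋯ ∘ w_{i₁}(x) is strictly dominant (y₁ > y₂ > ⋯ > y_ℓ ≥ 1) and satisfies 2y₁ < N. -/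
open BigOperators

/-- The generators of the affine Weyl group `W̊ ⋉ N ℤ^ℓ` acting on `ℤ^ℓ`
(coordinates `0`-indexed, so `x 0` is the first coordinate `x₁`):
`s₀ x = (N - x₁, x₂, …, x_ℓ)`; for `1 ≤ j ≤ ℓ - 1`, `s_j` transposes the
(1-indexed) coordinates `j` and `j+1`; `s_ℓ` negates the last coordinate. -/
def sRefl (ℓ : ℕ) (N : ℤ) (j : ℕ) (x : Fin ℓ → ℤ) : Fin ℓ → ℤ :=
  if j = 0 then
    fun i => if i.1 = 0 then N - x i else x i
  else if hj : j < ℓ then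
    fun i => if i.1 = j - 1 then x ⟨j, hj⟩
             else if i.1 = j then x ⟨j - 1, by omega⟩
             else x i
  else
    fun i => if i.1 = ℓ - 1 then - x i else x i

/-- The elements `w₀ = id` and `w_i = s_{i-1} s_{i-2} ⋯ s₁ s₀` for `i ≥ 1`. -/
def wElem (ℓ : ℕ) (N : ℤ) : ℕ → (Fin ℓ → ℤ) → (Fin ℓ → ℤ)
  | 0 => id
  | (i + 1) => fun x => sRefl ℓ N i (wElem ℓ N i x)

/-- A point `x ∈ ℤ^ℓ` is strictly dominant if `x₁ > x₂ > ⋯ > x_ℓ ≥ 1`. -/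
def StrictDom (ℓ : ℕ) (x : Fin ℓ → ℤ) : Prop :=
  (∀ i j : Fin ℓ, i < j → x j < x i) ∧ (∀ i : Fin ℓ, 1 ≤ x i)

/-- A point `x ∈ ℤ^ℓ` is regular (has trivial stabilizer in `W̊ ⋉ N ℤ^ℓ`) if
`x_i + x_j ≢ 0 (mod N)` for `i ≠ j` and `2 x_i ≢ 0 (mod N)` for all `i`. -/
def RegularPt (ℓ : ℕ) (N : ℤ) (x : Fin ℓ → ℤ) : Prop :=
  (∀ i j : Fin ℓ, i ≠ j → ¬ (N ∣ x i + x j)) ∧ (∀ i : Fin ℓ, ¬ (N ∣ 2 * x i))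

/-!
If `2 x₁ > N` (equality is excluded by regularity), then `c = N - x₁` satisfies `1 ≤ c < x₁` and
differs from every `x_j`, since `x_j + x₁ ≢ 0`. For `1 ≤ m ≤ ℓ`, `w_m x` is `x` with `x₁` deleted
and `c` inserted at position `m`; choosing `m` as the sorted position of `c` gives a strictly
dominant point with smaller first coordinate. It is again regular: inside the box `(0, N)^ℓ`
regularity says that no two coordinates (possibly the same one twice) sum to `N`, and
`c + x_j = N` would force `x_j = x₁`. Iterating, the first coordinate drops by at least one per
step and stays positive, so `2 y₁ < N` is reached after at most `x₁ < N` steps; `w₀ = id` makes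
the sequence nonempty when no step is needed.
-/

section Insertion

variable {α : Type*} {n : ℕ}

theorem Fin.insertNth_apply_eq_or (q : Fin (n + 1)) (c : α) (x : Fin n → α) (j : Fin (n + 1)) :
    Fin.insertNth (α := fun _ ↦ α) q c x j = c ∨
      ∃ p, Fin.insertNth (α := fun _ ↦ α) q c x j = x p := by
  rcases q.eq_self_or_eq_succAbove j with rfl | ⟨p, rfl⟩
  · exact .inl (Fin.insertNth_apply_same _ _ _)
  · exact .inr ⟨p, Fin.insertNth_apply_succAbove _ _ _ _⟩

variable [LinearOrder α]

theorem Fin.strictAnti_insertNth_iff (q : Fin (n + 1)) (c : α) (x : Fin n → α) :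
    StrictAnti (q.insertNth c x) ↔
      StrictAnti x ∧ (∀ p, p.castSucc < q → c < x p) ∧ (∀ p, q ≤ p.castSucc → x p < c) :=
  Fin.strictMono_insertNth_iff (α := αᵒᵈ) q c x

theorem StrictAnti.exists_strictAnti_insertNth {x : Fin n → α} (hx : StrictAnti x) {c : α}
    (hc : ∀ p, x p ≠ c) : ∃ q : Fin (n + 1), StrictAnti (q.insertNth c x) := by
  have hP : ∃ m, ∀ p : Fin n, m ≤ p.val → x p < c := ⟨n, fun p hp => absurd p.isLt (by omega)⟩
  have hmin : Nat.find hP ≤ n := Nat.find_min' hP fun p hp => absurd p.isLt (by omega)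
  refine ⟨⟨Nat.find hP, by omega⟩, (Fin.strictAnti_insertNth_iff _ _ _).2
    ⟨hx, fun p hp => ?_, Nat.find_spec hP⟩⟩
  obtain ⟨r, hpr, hr⟩ : ∃ r : Fin n, p.val ≤ r.val ∧ c ≤ x r := by
    simpa using Nat.find_min hP hp
  exact lt_of_le_of_ne (hr.trans (hx.antitone hpr)) (hc p).symm

end Insertion

theorem Int.dvd_iff_eq_of_pos_of_lt_two_mul {N s : ℤ} (hs : 0 < s) (hsN : s < 2 * N) :
    N ∣ s ↔ s = N := by
  refine ⟨fun ⟨t, ht⟩ => ?_, fun h => h ▸ dvd_rfl⟩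
  subst ht
  have : t = 1 := by nlinarith
  simp [this]

theorem regularPt_iff_forall_add_ne {ℓ : ℕ} {N : ℤ} {x : Fin ℓ → ℤ}
    (hx : ∀ i, 0 < x i ∧ x i < N) : RegularPt ℓ N x ↔ ∀ i j, x i + x j ≠ N := by
  have hdvd : ∀ i j, N ∣ x i + x j ↔ x i + x j = N := fun i j =>
    Int.dvd_iff_eq_of_pos_of_lt_two_mul (by linarith [hx i, hx j]) (by linarith [hx i, hx j])
  simp only [RegularPt, two_mul, hdvd]
  refine ⟨fun h i j => ?_, fun h => ⟨fun i j _ => h i j, fun i => h i i⟩⟩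
  rcases eq_or_ne i j with rfl | hij
  exacts [h.2 i, h.1 i j hij]

theorem wElem_apply {ℓ : ℕ} (N : ℤ) {m : ℕ} (hm : 1 ≤ m) (hmℓ : m ≤ ℓ) (x : Fin ℓ → ℤ)
    (p : Fin ℓ) :
    wElem ℓ N m x p =
      if h : p.val + 1 < m then x ⟨p.val + 1, by omega⟩
      else if p.val + 1 = m then N - x ⟨0, by omega⟩
      else x p := by
  induction m, hm using Nat.le_induction generalizing p with
  | base =>
    simp only [wElem, sRefl, id, ↓reduceIte]
    split_ifs <;> grind
  | succ m hm ih =>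
    simp only [wElem, sRefl, Nat.pos_iff_ne_zero.mp hm, if_false, dif_pos (by omega : m < ℓ),
      ih (by omega)]
    split_ifs <;> grind

theorem wElem_eq_insertNth {n : ℕ} (N : ℤ) (x : Fin (n + 1) → ℤ) (q : Fin (n + 1)) :
    wElem (n + 1) N (q.val + 1) x = q.insertNth (N - x 0) (Fin.tail x) := by
  ext p
  rw [wElem_apply N le_add_self q.isLt]
  rcases lt_trichotomy p q with h | rfl | h
  · rw [Fin.insertNth_apply_below h, dif_pos (by simpa using h), eq_rec_constant]
    rfl
  · simp
  · have hpq : p.val ≠ q.val := Fin.val_ne_of_ne h.ne'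
    rw [Fin.insertNth_apply_above h, eq_rec_constant, dif_neg (by omega), if_neg (by omega),
      Fin.tail, Fin.succ_pred]

section AlcoveStep

variable {n : ℕ} {N : ℤ} {x : Fin (n + 1) → ℤ}

theorem exists_wElem_strictDom_regularPt (hdom : StrictDom (n + 1) x)
    (hreg : RegularPt (n + 1) N x) (hxN : x 0 < N) (hNx : N < 2 * x 0) :
    ∃ m ≤ n + 1, StrictDom (n + 1) (wElem (n + 1) N m x) ∧
      RegularPt (n + 1) N (wElem (n + 1) N m x) ∧ wElem (n + 1) N m x 0 < x 0 := by
  obtain ⟨hanti, hpos⟩ : StrictAnti x ∧ ∀ i, 1 ≤ x i := hdom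
  have hbox : ∀ i, 0 < x i ∧ x i < N := fun i =>
    ⟨by linarith [hpos i], (hanti.antitone (Fin.zero_le i)).trans_lt hxN⟩
  have hsum := (regularPt_iff_forall_add_ne hbox).1 hreg
  have htail : ∀ p : Fin n, x p.succ < x 0 := fun p => hanti (Fin.succ_pos p)
  obtain ⟨q, hq⟩ := (hanti.comp_strictMono Fin.strictMono_succ).exists_strictAnti_insertNth
    (x := Fin.tail x) (c := N - x 0) fun p hp => hsum p.succ 0 (by rw [Fin.tail] at hp; linarith)
  refine ⟨q + 1, q.isLt, ?_⟩
  rw [wElem_eq_insertNth]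
  set y : Fin (n + 1) → ℤ := q.insertNth (N - x 0) (Fin.tail x)
  have hval : ∀ j, y j = N - x 0 ∨ ∃ p : Fin n, y j = x p.succ :=
    Fin.insertNth_apply_eq_or q (N - x 0) (Fin.tail x)
  have hbound : ∀ j, 1 ≤ y j ∧ y j < x 0 := fun j => by
    rcases hval j with h | ⟨p, h⟩ <;> rw [h]
    · constructor <;> linarith
    · exact ⟨hpos _, htail p⟩
  refine ⟨⟨hq, fun j => (hbound j).1⟩, (regularPt_iff_forall_add_ne fun j => ?_).2 ?_,
    (hbound 0).2⟩
  · exact ⟨by linarith [hbound j], by linarith [hbound j]⟩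
  intro i j
  rcases hval i with hi | ⟨p, hi⟩ <;> rcases hval j with hj | ⟨r, hj⟩ <;> rw [hi, hj]
  · exact fun h => hsum 0 0 (by linarith)
  · exact fun h => (htail r).ne (by linarith)
  · exact fun h => (htail p).ne (by linarith)
  · exact hsum _ _

theorem exists_wElem_path (hdom : StrictDom (n + 1) x) (hreg : RegularPt (n + 1) N x)
    (hxN : x 0 < N) :
    ∃ L : List ℕ, 1 ≤ L.length ∧ (L.length : ℤ) ≤ x 0 ∧ (∀ t ∈ L, t ≤ n + 1) ∧
      StrictDom (n + 1) (L.foldl (fun v i => wElem (n + 1) N i v) x) ∧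
      2 * (L.foldl (fun v i => wElem (n + 1) N i v) x) 0 < N := by
  induction hk : (x 0).toNat using Nat.strong_induction_on generalizing x with
  | _ k ih =>
    have hx0 := hdom.2 0
    rcases lt_or_gt_of_ne fun h : 2 * x 0 = N => hreg.2 0 (h ▸ dvd_rfl) with hsmall | hbig
    · exact ⟨[0], le_rfl, by simpa using hx0, by simp, hdom, hsmall⟩
    obtain ⟨m, hmn, hdom', hreg', hlt⟩ := exists_wElem_strictDom_regularPt hdom hreg hxN hbig
    obtain ⟨L, hL1, hLx, hLn, hdomL, hL⟩ :=
      ih _ (by have := hdom'.2 0; omega) hdom' hreg' (hlt.trans hxN) rfl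
    refine ⟨m :: L, by simp, ?_, ?_, hdomL, hL⟩
    · push_cast [List.length_cons]; omega
    · simpa [hmn] using hLn

end AlcoveStep

/-- The alcove algorithm for `A₂ℓ⁽²⁾`: with `N = k + 2ℓ + 1`, every strictly
dominant regular point `x ∈ ℤ^ℓ` with `x₁ < N` can be moved, by applying at
most `N` of the elements `w₀, …, w_ℓ`, to a strictly dominant point `y` with
`2 y₁ < N`. -/
theorem alcove_algorithm (ℓ k : ℕ) (hl : 1 ≤ ℓ)
    (x : Fin ℓ → ℤ)
    (hdom : StrictDom ℓ x)
    (hreg : RegularPt ℓ ((k : ℤ) + 2 * ℓ + 1) x)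
    (hx1 : x ⟨0, by omega⟩ < (k : ℤ) + 2 * ℓ + 1) :
    ∃ L : List ℕ, 1 ≤ L.length ∧ (L.length : ℤ) ≤ (k : ℤ) + 2 * ℓ + 1 ∧
      (∀ t ∈ L, t ≤ ℓ) ∧
      StrictDom ℓ (L.foldl (fun v i => wElem ℓ ((k : ℤ) + 2 * ℓ + 1) i v) x) ∧
      2 * (L.foldl (fun v i => wElem ℓ ((k : ℤ) + 2 * ℓ + 1) i v) x) ⟨0, by omega⟩
        < (k : ℤ) + 2 * ℓ + 1 := by
  obtain ⟨n, rfl⟩ : ∃ n, ℓ = n + 1 := ⟨ℓ - 1, by omega⟩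
  obtain ⟨L, hL1, hLx, hLℓ, hdomL, hL⟩ := exists_wElem_path hdom hreg hx1
  exact ⟨L, hL1, hLx.trans hx1.le, hLℓ, hdomL, hL⟩
end
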